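/- arXiv:1512.02499 — 5 statements merged into one kernel-verified Lean document; each statement's English description precedes it below -/
import Mathlib

section
/- Let U be a universe of separations with a submodular order function, and let s← ≤ r← be two separations in U. If x← is a separation of minimal order among all separations z with s← ≤ z← ≤ r←, then x→ is linked to r→: for every y→ ≥ r→ one has |x→ ∨ y→| ≤ |y→|. -/
/-- If `x` has minimal order among all separations `z` with `s ≤ z ≤ r`,
then `x*` is linked to `r*`: `r* ≤ x*` and `|x* ∨ y| ≤ |y|` for all `y ≥ r*`. -/
theorem stmt_6 {α : Type*} [Lattice α] (star : α → α)
    (hinv : ∀ a, star (star a) = a)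
    (hanti : ∀ a b : α, a ≤ b → star b ≤ star a)
    (ord : α → ℝ)
    (hnn : ∀ a, 0 ≤ ord a)
    (hsym : ∀ a, ord (star a) = ord a)
    (hsub : ∀ a b : α, ord (a ⊔ b) + ord (a ⊓ b) ≤ ord a + ord b)
    (s r x : α) (hsr : s ≤ r) (hsx : s ≤ x) (hxr : x ≤ r)
    (hmin : ∀ z : α, s ≤ z → z ≤ r → ord x ≤ ord z) :
    star r ≤ star x ∧ ∀ y : α, star r ≤ y → ord (star x ⊔ y) ≤ ord y := by
  refine ⟨hanti _ _ hxr, fun y hy => ?_⟩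
  have h1 : x ≤ star (star x ⊓ y) := by
    have := hanti (star x ⊓ y) (star x) inf_le_left
    rwa [hinv] at this
  have h2 : star (star x ⊓ y) ≤ r := by
    have := hanti (star r) (star x ⊓ y) (le_inf (hanti _ _ hxr) hy)
    rwa [hinv] at this
  have h3 := hmin _ (hsx.trans h1) h2
  rw [hsym] at h3
  have h4 := hsub (star x) y
  rw [hsym] at h4
  linarith
end

section
/- The relation of being linked is transitive along chains: in a universe of separations with an order function, if r→ > s→ > t→, r→ is linked to s→, and s→ is linked to t→, then r→ is linked to t→. -/
/-- Being linked is transitive along chains: if `t < s < r`, `r` is linked to `s`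
and `s` is linked to `t`, then `r` is linked to `t`. -/
theorem stmt_7 {α : Type*} [Lattice α] (star : α → α)
    (hinv : ∀ a, star (star a) = a)
    (hanti : ∀ a b : α, a ≤ b → star b ≤ star a)
    (ord : α → ℝ)
    (hnn : ∀ a, 0 ≤ ord a)
    (hsym : ∀ a, ord (star a) = ord a)
    (hsub : ∀ a b : α, ord (a ⊔ b) + ord (a ⊓ b) ≤ ord a + ord b)
    (t s r : α) (hts : t < s) (hsr : s < r)
    (hlink_rs : ∀ x : α, s ≤ x → ord (x ⊔ r) ≤ ord x)
    (hlink_st : ∀ x : α, t ≤ x → ord (x ⊔ s) ≤ ord x) :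
    t ≤ r ∧ ∀ x : α, t ≤ x → ord (x ⊔ r) ≤ ord x := by
  refine ⟨hts.le.trans hsr.le, fun x hx => ?_⟩
  have h1 : x ⊔ r = (x ⊔ s) ⊔ r := by
    rw [sup_assoc, sup_eq_right.mpr hsr.le]
  rw [h1]
  exact (hlink_rs _ le_sup_right).trans (hlink_st x hx)
end

section
/- Let U be a distributive universe of separations with an order function, and let x←₁, x←₂ ∈ U. Let u←₁ be any separation of minimal order with x←₁ ∧ x→₂ ≤ u←₁ ≤ x←₁, and set u←₂ = x←₂ ∧ u→₁. Then: (i) u→₁ is linked to x→₁ and u→₂ is linked to x→₂; (ii) |u←₁| ≤ |x←₁| and |u←₂| ≤ |x←₂|; (iii) u←₁ = x←₁ ∧ u→₂. In particular {u←₁, u←₂} is a star. -/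
/-- Uncrossing a pair of separations in a distributive universe: with `u₁`
of minimal order in the interval `[x₁ ⊓ x₂*, x₁]` and `u₂ = x₂ ⊓ u₁*`, we get
`u₁*` linked to `x₁*`, `u₂*` linked to `x₂*`, the orders do not increase,
`u₁ = x₁ ⊓ u₂*`, and `{u₁, u₂}` is a star. -/
theorem stmt_8 {α : Type*} [DistribLattice α] (star : α → α)
    (hinv : ∀ a, star (star a) = a)
    (hanti : ∀ a b : α, a ≤ b → star b ≤ star a)
    (ord : α → ℝ)
    (hnn : ∀ a, 0 ≤ ord a)
    (hsym : ∀ a, ord (star a) = ord a)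
    (hsub : ∀ a b : α, ord (a ⊔ b) + ord (a ⊓ b) ≤ ord a + ord b)
    (x1 x2 u1 u2 : α)
    (hlow : x1 ⊓ star x2 ≤ u1) (hup : u1 ≤ x1)
    (hmin : ∀ z : α, x1 ⊓ star x2 ≤ z → z ≤ x1 → ord u1 ≤ ord z)
    (hu2 : u2 = x2 ⊓ star u1) :
    (star x1 ≤ star u1 ∧ ∀ y : α, star x1 ≤ y → ord (y ⊔ star u1) ≤ ord y) ∧
    (star x2 ≤ star u2 ∧ ∀ y : α, star x2 ≤ y → ord (y ⊔ star u2) ≤ ord y) ∧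
    ord u1 ≤ ord x1 ∧ ord u2 ≤ ord x2 ∧
    u1 = x1 ⊓ star u2 ∧
    (u1 ≤ star u2 ∧ u2 ≤ star u1) := by
  have hgal : ∀ a b : α, star a ≤ b ↔ star b ≤ a := by
    intro a b
    constructor
    · intro h; have := hanti _ _ h; rwa [hinv] at this
    · intro h; have := hanti _ _ h; rwa [hinv] at this
  have hsinf : ∀ a b : α, star (a ⊓ b) = star a ⊔ star b := by
    intro a b
    apply le_antisymm
    · rw [hgal]
      refine le_inf ?_ ?_
      · rw [← hgal]; exact le_sup_left
      · rw [← hgal]; exact le_sup_right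
    · exact sup_le (hanti _ _ inf_le_left) (hanti _ _ inf_le_right)
  have hu2s : star u2 = star x2 ⊔ u1 := by rw [hu2, hsinf, hinv]
  refine ⟨⟨hanti _ _ hup, ?_⟩, ⟨?_, ?_⟩, ?_, ?_, ?_, ?_, ?_⟩
  · intro y hy
    have key : y ⊔ star u1 = star (star y ⊓ u1) := by rw [hsinf, hinv]
    rw [key, hsym]
    have hz : star y ≤ x1 := (hgal x1 y).mp hy
    have h1 : ord u1 ≤ ord (star y ⊔ u1) :=
      hmin _ (hlow.trans le_sup_right) (sup_le hz hup)
    have h2 := hsub (star y) u1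
    rw [hsym] at h2
    linarith
  · have h : u2 ≤ x2 := by rw [hu2]; exact inf_le_left
    exact hanti _ _ h
  · intro y hy
    rw [hu2s, ← sup_assoc, sup_eq_left.2 hy]
    have h1 : ord u1 ≤ ord (y ⊓ u1) :=
      hmin _ (le_inf (inf_le_right.trans hy) hlow) (inf_le_right.trans hup)
    have h2 := hsub y u1
    linarith
  · exact hmin x1 inf_le_left le_rfl
  · have h1 : ord u1 ≤ ord (star x2 ⊓ u1) :=
      hmin _ (le_inf inf_le_right hlow) (inf_le_right.trans hup)
    have h2 := hsub (star x2) u1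
    calc ord u2 = ord (star u2) := (hsym u2).symm
      _ = ord (star x2 ⊔ u1) := by rw [hu2s]
      _ ≤ ord (star x2) := by linarith
      _ = ord x2 := hsym x2
  · rw [hu2s, inf_sup_left, inf_eq_right.2 hup]
    exact (sup_eq_right.2 hlow).symm
  · rw [hu2s]; exact le_sup_right
  · rw [hu2]; exact inf_le_right
end

section
/- Uncrossing preserves the union of small sides: if Lemma 'pair' is applied to graph separations (C,D) and (E,F), producing (C',D') = (C ∩ F', D ∪ E') and (E',F') = (E ∩ D', F ∪ C'), then C ∪ E = C' ∪ E'. -/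
open Finset

def IsSepPair {V : Type*} [Fintype V] [DecidableEq V] (G : SimpleGraph V)
    (A B : Finset V) : Prop :=
  A ∪ B = Finset.univ ∧
    ∀ a b : V, G.Adj a b → ¬(a ∈ A ∧ a ∉ B ∧ b ∈ B ∧ b ∉ A)

/-- Uncrossing preserves the union of the small sides: if `(C',D') = (C,D) ∧ (F',E')`
and `(E',F') = (E,F) ∧ (D',C')`, then `C ∪ E = C' ∪ E'`. -/
theorem stmt_15 {V : Type*} [Fintype V] [DecidableEq V] (G : SimpleGraph V)
    (C D E F C' D' E' F' : Finset V)
    (hCD : IsSepPair G C D) (hEF : IsSepPair G E F)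
    (hCD' : IsSepPair G C' D') (hEF' : IsSepPair G E' F')
    (h1 : C' = C ∩ F') (h2 : D' = D ∪ E')
    (h3 : E' = E ∩ D') (h4 : F' = F ∪ C') :
    C ∪ E = C' ∪ E' := by
  ext x
  have hef : x ∈ E ∪ F := hEF.1 ▸ mem_univ x
  have hcd' : x ∈ C' ∪ D' := hCD'.1 ▸ mem_univ x
  have m1 : x ∈ C' ↔ x ∈ C ∧ x ∈ F' := by rw [h1]; simp
  have m2 : x ∈ D' ↔ x ∈ D ∨ x ∈ E' := by rw [h2]; simp
  have m3 : x ∈ E' ↔ x ∈ E ∧ x ∈ D' := by rw [h3]; simp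
  have m4 : x ∈ F' ↔ x ∈ F ∨ x ∈ C' := by rw [h4]; simp
  simp only [mem_union] at *
  tauto
end

section
/- If O is a consistent orientation of the set S of separations induced by the edges of a tree T (via an S-tree (T, α) over a family of stars), then the orientation induced by O on the edges of T has a unique sink vertex. -/
/-- If `O` is a consistent orientation of the separations induced by the edges
of a tree via an irredundant `S`-tree `(T, α)` over stars, then the induced
orientation of the edges of `T` has a unique sink. -/
theorem stmt_17 {V : Type*} [Fintype V] [DecidableEq V] {β : Type*} [PartialOrder β]
    (G : SimpleGraph V) (hT : G.IsTree)
    (star : β → β)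
    (hinv : ∀ b, star (star b) = b)
    (hanti : ∀ a b : β, a ≤ b → star b ≤ star a)
    (α : V → V → β)
    (hcompat : ∀ a b : V, G.Adj a b → α b a = star (α a b))
    (horder : ∀ a b c d : V, G.Adj a b → G.Adj c d → s(a, b) ≠ s(c, d) →
      (G.deleteEdges {s(a, b)}).Reachable b c →
      (G.deleteEdges {s(c, d)}).Reachable c b →
      α a b ≤ α c d)
    (hstars : ∀ t a b : V, G.Adj a t → G.Adj b t → a ≠ b → α a t ≤ star (α b t))
    (hirr : ∀ t a b : V, G.Adj t a → G.Adj t b → a ≠ b → α t a ≠ α t b)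
    (O : Set β)
    (horient : ∀ a b : V, G.Adj a b → (α a b ∈ O ↔ α b a ∉ O))
    (hcons : ∀ p q : β, p ≤ q → q ≠ p → q ≠ star p → star p ∈ O → q ∉ O) :
    ∃! t : V, ∀ a : V, G.Adj a t → α a t ∈ O := by
  classical
  -- Key lemma: a vertex cannot have two distinct out-edges.
  have key : ∀ t a b : V, G.Adj a t → G.Adj b t → a ≠ b → α t a ∈ O → α t b ∈ O → False := by
    intro t a b hat hbt hab h1 h2
    have hle : α a t ≤ α t b := by
      have h := hstars t a b hat hbt hab
      rwa [← hcompat b t hbt] at h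
    have hsp : star (α a t) = α t a := (hcompat a t hat).symm
    by_cases hqp : α t b = α a t
    · have hA : α a t ∈ O := hqp ▸ h2
      exact (horient a t hat).mp hA h1
    · by_cases hqs : α t b = α t a
      · exact hirr t a b hat.symm hbt.symm hab hqs.symm
      · exact hcons (α a t) (α t b) hle hqp (by rw [hsp]; exact hqs)
          (by rw [hsp]; exact h1) h2
  -- Along any path ending at a sink, every edge points forward.
  have aux : ∀ t : V, (∀ a, G.Adj a t → α a t ∈ O) →
      ∀ {v : V} (w : G.Walk v t) (u : V) (h : G.Adj u v),
        (SimpleGraph.Walk.cons h w).IsPath → α u v ∈ O := by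
    intro t ht v w
    induction w with
    | nil => intro u h _; exact ht u h
    | @cons v v' t h' w' ih =>
      intro u h hp
      obtain ⟨hp', hu⟩ := (SimpleGraph.Walk.cons_isPath_iff _ _).mp hp
      have h2 : α v v' ∈ O := ih ht v h' hp'
      have hune : u ≠ v' := by
        intro e
        refine hu ?_
        rw [e]
        simp [SimpleGraph.Walk.support_cons]
      by_contra hnc
      have hvu : α v u ∈ O := by
        by_contra hvu
        exact hnc ((horient u v h).mpr hvu)
      exact key v u v' h h'.symm hune hvu h2
  -- Existence of a sink, by a counting argument.
  have hex : ∃ t, ∀ a, G.Adj a t → α a t ∈ O := by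
    by_contra hno
    push_neg at hno
    choose g hg1 hg2 using hno
    have hinj : Function.Injective (fun t => s(t, g t)) := by
      intro t t' he
      by_contra hne
      simp only [Sym2.eq_iff] at he
      rcases he with ⟨h1, _⟩ | ⟨h1, h2⟩
      · exact hne h1
      · have hadj : G.Adj t t' := by
          have := hg1 t; rw [h2] at this; exact this.symm
        have hb : α t t' ∉ O := by
          have := hg2 t'; rwa [← h1] at this
        have ha : α t t' ∈ O := by
          have := hg2 t; rw [h2] at this
          exact (horient t t' hadj).mpr this
        exact hb ha
    have hmem : ∀ t : V, s(t, g t) ∈ G.edgeFinset := by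
      intro t
      rw [SimpleGraph.mem_edgeFinset, SimpleGraph.mem_edgeSet]
      exact (hg1 t).symm
    have hcard : Fintype.card V ≤ G.edgeFinset.card := by
      have h := Finset.card_le_card_of_injOn (s := Finset.univ) (t := G.edgeFinset) (fun t => s(t, g t))
        (fun t _ => hmem t) (hinj.injOn)
      simpa using h
    have htree := hT.card_edgeFinset
    omega
  obtain ⟨t, ht⟩ := hex
  refine ⟨t, ht, ?_⟩
  intro t' ht'
  by_contra hne
  obtain ⟨w⟩ := hT.isConnected.preconnected t' t
  have step : ∀ u (w : G.Walk u t), w.IsPath → u ≠ t → ∃ v, G.Adj u v ∧ α u v ∈ O := by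
    intro u w hw hu
    cases w with
    | nil => exact absurd rfl hu
    | cons h q => exact ⟨_, h, aux t ht q _ h hw⟩
  obtain ⟨v, hadj, hO⟩ := step t' w.bypass w.bypass_isPath hne
  have hvt : α v t' ∈ O := ht' v hadj.symm
  exact absurd hvt ((horient t' v hadj).mp hO)
end
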